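/- arXiv:0908.4540 — 4 statements merged into one kernel-verified Lean document; each statement's English description precedes it below -/
import Mathlib

section
/- Let (a_k)_{k≥1} be a strictly increasing integer sequence with a_1 = 1 such that a_{m+1} − a_m → ∞ and (a_{m+1} − a_m)² / ∑_{k=2}^m (a_k − a_{k−1})² → 0 as m → ∞. Then lim_{m→∞} v_{a_{m+1}}/v_{a_m} = 1; consequently, writing m_n for the index with a_{m_n} ≤ n < a_{m_n+1}, one has v_n / v_{a_{m_n}} → 1 as n → ∞. -/
open Filter Finset Topology

/-!
With `d_m = a_{m+1} - a_m`, the summands `l_i` over the block `a_m < i ≤ a_{m+1}` are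
`2, 3, …, d_m, 1`, so `v_{a_{m+1}} = v_{a_m} + d_m (d_m + 1) / 2`. Summing these increments gives
`2 v_{a_m} ≥ ∑_{k=2}^m (a_k - a_{k-1})²`, hence
`v_{a_{m+1}} / v_{a_m} - 1 ≤ 2 d_m² / ∑_{k=2}^m (a_k - a_{k-1})² → 0`.
For `a_{m_n} ≤ n < a_{m_n+1}`, monotonicity of `v` squeezes `v_n / v_{a_{m_n}}` between `1` and
`v_{a_{m_n+1}} / v_{a_{m_n}}`.
-/

lemma tendsto_atTop_of_lt_strictMono {b idx : ℕ → ℕ} (hb : StrictMono b)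
    (h : ∀ᶠ n in atTop, n < b (idx n)) : Tendsto idx atTop atTop :=
  tendsto_atTop.2 fun M => (h.and (eventually_ge_atTop (b M))).mono
    fun _ ⟨hlt, hge⟩ => (hb.lt_iff_lt.1 (hge.trans_lt hlt)).le

lemma tendsto_div_of_mem_Ico {f : ℕ → ℝ} (hf : Monotone f) {b idx : ℕ → ℕ}
    (hratio : Tendsto (fun m => f (b (m + 1)) / f (b m)) atTop (𝓝 1))
    (hidx : Tendsto idx atTop atTop) (hpos : ∀ᶠ n in atTop, 0 < f (b (idx n)))
    (hmem : ∀ᶠ n in atTop, b (idx n) ≤ n ∧ n < b (idx n + 1)) :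
    Tendsto (fun n => f n / f (b (idx n))) atTop (𝓝 1) := by
  refine tendsto_of_tendsto_of_tendsto_of_le_of_le' tendsto_const_nhds (hratio.comp hidx) ?_ ?_
  · filter_upwards [hpos, hmem] with n hn ⟨hle, _⟩
    exact (one_le_div hn).2 (hf hle)
  · filter_upwards [hpos, hmem] with n hn ⟨_, hlt⟩
    exact div_le_div_of_nonneg_right (hf hlt.le) hn.le

lemma two_mul_sum_Ioc_sub_add_one {t : ℕ → ℕ} {p d : ℕ} (hd : 0 < d)
    (hlow : ∀ i, p ≤ i → i < p + d → t i = p) (htop : t (p + d) = p + d) :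
    2 * ∑ i ∈ Ioc p (p + d), (i - t i + 1) = d * (d + 1) := by
  have hbelow : ∀ e < d, 2 * ∑ i ∈ Ioc p (p + e), (i - t i + 1) = e * (e + 3) := by
    intro e he
    induction e with
    | zero => simp
    | succ e ih =>
      rw [← add_assoc, sum_Ioc_succ_top (by omega), mul_add, ih (by omega),
        hlow _ (by omega) (by omega)]
      rw [show p + e + 1 - p = e + 1 by omega]
      ring
  obtain ⟨e, rfl⟩ : ∃ e, d = e + 1 := ⟨d - 1, by omega⟩
  rw [← add_assoc] at htop ⊢
  rw [sum_Ioc_succ_top (by omega), mul_add, hbelow e (by omega), htop, Nat.sub_self]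
  ring

section

variable {a t v : ℕ → ℕ}

lemma self_le_v (hv : ∀ n, v n = ∑ i ∈ Icc 1 n, (i - t i + 1)) (n : ℕ) : n ≤ v n := by
  calc n = ∑ _i ∈ Icc 1 n, 1 := by simp
    _ ≤ v n := hv n ▸ sum_le_sum fun _ _ => le_add_self

lemma monotone_v (hv : ∀ n, v n = ∑ i ∈ Icc 1 n, (i - t i + 1)) : Monotone v :=
  fun x y hxy => by
    simpa only [hv] using sum_le_sum_of_subset (Icc_subset_Icc_right hxy)

lemma strictMono_succ_of_lt_succ (hamono : ∀ k, 1 ≤ k → a k < a (k + 1)) :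
    StrictMono fun k => a (k + 1) :=
  strictMono_nat_of_lt_succ fun k => hamono (k + 1) (by omega)

lemma two_mul_v_a_succ (hamono : ∀ k, 1 ≤ k → a k < a (k + 1))
    (ht : ∀ k, 1 ≤ k → ∀ i, a k ≤ i → i < a (k + 1) → t i = a k)
    (hv : ∀ n, v n = ∑ i ∈ Icc 1 n, (i - t i + 1)) {m : ℕ} (hm : 1 ≤ m) :
    2 * (v (a (m + 1)) : ℝ) =
      2 * v (a m) + ((a (m + 1) : ℝ) - a m) * ((a (m + 1) : ℝ) - a m + 1) := by
  obtain ⟨d, hd⟩ : ∃ d, a (m + 1) = a m + d :=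
    ⟨a (m + 1) - a m, by have := hamono m hm; omega⟩
  have hblock : 2 * ∑ i ∈ Ioc (a m) (a m + d), (i - t i + 1) = d * (d + 1) := by
    refine two_mul_sum_Ioc_sub_add_one (by have := hamono m hm; omega)
      (fun i hi hi' => ht m hm i hi (hd ▸ hi')) ?_
    rw [← hd]
    exact ht (m + 1) (by omega) _ le_rfl (hamono (m + 1) (by omega))
  have hsplit : v (a (m + 1)) = v (a m) + ∑ i ∈ Ioc (a m) (a m + d), (i - t i + 1) := by
    have hIoc : ∀ n, Icc 1 n = Ioc 0 n := Icc_add_one_left_eq_Ioc 0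
    rw [hv, hv, hIoc, hIoc, ← hd, sum_Ioc_consecutive _ (Nat.zero_le _) (hamono m hm).le]
  have hblock' :
      (2 * ∑ i ∈ Ioc (a m) (a m + d), (i - t i + 1) : ℕ) = (d : ℝ) * (d + 1) := by
    exact_mod_cast hblock
  rw [hsplit, hd]
  push_cast at hblock' ⊢
  linarith

lemma sum_sq_gaps_le_two_mul_v_a (hamono : ∀ k, 1 ≤ k → a k < a (k + 1))
    (ht : ∀ k, 1 ≤ k → ∀ i, a k ≤ i → i < a (k + 1) → t i = a k)
    (hv : ∀ n, v n = ∑ i ∈ Icc 1 n, (i - t i + 1)) {m : ℕ} (hm : 1 ≤ m) :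
    ∑ k ∈ Icc 2 m, ((a k : ℝ) - a (k - 1)) ^ 2 ≤ 2 * v (a m) := by
  induction m, hm using Nat.le_induction with
  | base => simp
  | succ m hm ih =>
    have hgap : (a m : ℝ) ≤ a (m + 1) := by exact_mod_cast (hamono m hm).le
    rw [sum_Icc_succ_top (by omega), Nat.add_sub_cancel, two_mul_v_a_succ hamono ht hv hm]
    nlinarith

lemma v_a_pos (hamono : ∀ k, 1 ≤ k → a k < a (k + 1))
    (hv : ∀ n, v n = ∑ i ∈ Icc 1 n, (i - t i + 1)) {k : ℕ} (hk : 2 ≤ k) :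
    0 < (v (a k) : ℝ) := by
  have ha : a 1 < a k := by
    simpa [Nat.sub_add_cancel (by omega : 1 ≤ k)] using
      strictMono_succ_of_lt_succ hamono (show 0 < k - 1 by omega)
  exact_mod_cast (show 0 < a k by omega).trans_le (self_le_v hv _)

lemma v_a_succ_div_le (hamono : ∀ k, 1 ≤ k → a k < a (k + 1))
    (ht : ∀ k, 1 ≤ k → ∀ i, a k ≤ i → i < a (k + 1) → t i = a k)
    (hv : ∀ n, v n = ∑ i ∈ Icc 1 n, (i - t i + 1)) {m : ℕ} (hm : 2 ≤ m) :
    (v (a (m + 1)) : ℝ) / v (a m) ≤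
      1 + 2 * (((a (m + 1) : ℝ) - a m) ^ 2 /
        ∑ k ∈ Icc 2 m, ((a k : ℝ) - a (k - 1)) ^ 2) := by
  set S := ∑ k ∈ Icc 2 m, ((a k : ℝ) - a (k - 1)) ^ 2
  set d := (a (m + 1) : ℝ) - a m
  have hd : 1 ≤ d := by
    have := hamono m (by omega)
    simp only [d, le_sub_iff_add_le']
    exact_mod_cast this
  have hS : 0 < S := by
    refine lt_of_lt_of_le ?_ (single_le_sum (f := fun k => ((a k : ℝ) - a (k - 1)) ^ 2)
      (fun _ _ => sq_nonneg _) (mem_Icc.2 ⟨le_rfl, hm⟩))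
    have : (a 1 : ℝ) < a 2 := by exact_mod_cast hamono 1 le_rfl
    simp only [Nat.reduceSub]
    nlinarith
  have hV := v_a_pos hamono hv hm
  have hlow := sum_sq_gaps_le_two_mul_v_a hamono ht hv (by omega : 1 ≤ m)
  have hstep := two_mul_v_a_succ hamono ht hv (by omega : 1 ≤ m)
  have hsq : d ^ 2 ≤ 2 * (d ^ 2 / S) * v (a m) :=
    calc d ^ 2 = 2 * (d ^ 2 / S) * (S / 2) := by field_simp
      _ ≤ 2 * (d ^ 2 / S) * v (a m) := by gcongr; linarith
  rw [div_le_iff₀ hV]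
  nlinarith

lemma tendsto_v_a_succ_div_v_a (hamono : ∀ k, 1 ≤ k → a k < a (k + 1))
    (ht : ∀ k, 1 ≤ k → ∀ i, a k ≤ i → i < a (k + 1) → t i = a k)
    (hv : ∀ n, v n = ∑ i ∈ Icc 1 n, (i - t i + 1))
    (hratio : Tendsto (fun m => ((a (m + 1) : ℝ) - a m) ^ 2 /
      ∑ k ∈ Icc 2 m, ((a k : ℝ) - a (k - 1)) ^ 2) atTop (𝓝 0)) :
    Tendsto (fun m => (v (a (m + 1)) : ℝ) / v (a m)) atTop (𝓝 1) := by
  have hupper := (hratio.const_mul 2).const_add 1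
  rw [mul_zero, add_zero] at hupper
  refine tendsto_of_tendsto_of_tendsto_of_le_of_le' tendsto_const_nhds hupper ?_ ?_
  · filter_upwards [eventually_ge_atTop 2] with m hm
    exact (one_le_div (v_a_pos hamono hv hm)).2
      (by exact_mod_cast monotone_v hv (hamono m (by omega)).le)
  · filter_upwards [eventually_ge_atTop 2] with m hm using v_a_succ_div_le hamono ht hv hm

end

theorem vn_ratio_tendsto_one_general
    (a : ℕ → ℕ) (hamono : ∀ k, 1 ≤ k → a k < a (k + 1))
    (hratio : Tendsto
      (fun m => ((a (m + 1) : ℝ) - a m) ^ 2 /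
        ∑ k ∈ Finset.Icc 2 m, ((a k : ℝ) - a (k - 1)) ^ 2) atTop (nhds 0))
    (t : ℕ → ℕ) (ht : ∀ k, 1 ≤ k → ∀ i, a k ≤ i → i < a (k + 1) → t i = a k)
    (v : ℕ → ℕ) (hv : ∀ n, v n = ∑ i ∈ Finset.Icc 1 n, (i - t i + 1))
    -- m_n is the index with a_{m_n} ≤ n < a_{m_n + 1}
    (mn : ℕ → ℕ) (hmn : ∀ n, 1 ≤ n → 1 ≤ mn n ∧ a (mn n) ≤ n ∧ n < a (mn n + 1)) :
    Tendsto (fun m => (v (a (m + 1)) : ℝ) / v (a m)) atTop (nhds 1) ∧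
      Tendsto (fun n => (v n : ℝ) / v (a (mn n))) atTop (nhds 1) := by
  have hblocks := tendsto_v_a_succ_div_v_a hamono ht hv hratio
  have hmem : ∀ᶠ n in atTop, a (mn n) ≤ n ∧ n < a (mn n + 1) :=
    (eventually_ge_atTop 1).mono fun n hn => (hmn n hn).2
  have hmn_top : Tendsto mn atTop atTop :=
    tendsto_atTop_of_lt_strictMono (strictMono_succ_of_lt_succ hamono) (hmem.mono fun _ h => h.2)
  refine ⟨hblocks, tendsto_div_of_mem_Ico (fun _ _ h => ?_) hblocks hmn_top ?_ hmem⟩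
  · exact_mod_cast monotone_v hv h
  · exact (hmn_top.eventually_ge_atTop 2).mono fun _ => v_a_pos hamono hv

/-- **Equation (30) of Wu (2009)**: if the strictly increasing integer sequence `(a_k)` with
`a_1 = 1` satisfies `a_{m+1} - a_m → ∞` and
`(a_{m+1} - a_m)² / ∑_{k=2}^m (a_k - a_{k-1})² → 0`, then `v_{a_{m+1}} / v_{a_m} → 1` and,
for the index `m_n` with `a_{m_n} ≤ n < a_{m_n + 1}`, `v_n / v_{a_{m_n}} → 1`. -/
theorem vn_ratio_tendsto_one
    (a : ℕ → ℕ) (ha1 : a 1 = 1) (hamono : ∀ k, 1 ≤ k → a k < a (k + 1))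
    (hgap : Tendsto (fun m => a (m + 1) - a m) atTop atTop)
    (hratio : Tendsto
      (fun m => ((a (m + 1) : ℝ) - a m) ^ 2 /
        ∑ k ∈ Finset.Icc 2 m, ((a k : ℝ) - a (k - 1)) ^ 2) atTop (nhds 0))
    (t : ℕ → ℕ) (ht : ∀ k, 1 ≤ k → ∀ i, a k ≤ i → i < a (k + 1) → t i = a k)
    (v : ℕ → ℕ) (hv : ∀ n, v n = ∑ i ∈ Finset.Icc 1 n, (i - t i + 1))
    -- m_n is the index with a_{m_n} ≤ n < a_{m_n + 1}
    (mn : ℕ → ℕ) (hmn : ∀ n, 1 ≤ n → 1 ≤ mn n ∧ a (mn n) ≤ n ∧ n < a (mn n + 1)) :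
    Tendsto (fun m => (v (a (m + 1)) : ℝ) / v (a m)) atTop (nhds 1) ∧
      Tendsto (fun n => (v n : ℝ) / v (a (mn n))) atTop (nhds 1) :=
  vn_ratio_tendsto_one_general a hamono hratio t ht v hv mn hmn
end

section
/- Let (a_k)_{k≥1} be a strictly increasing integer sequence with a_1 = 1 such that a_{k+1} − a_k → ∞ as k → ∞. Then for every fixed k_0 ∈ ℕ, #{i ≤ n : i − t_i + 1 ≤ k_0} / v_n → 0 as n → ∞. -/
/-!
The indices `i` with `i - t i + 1 ≤ k₀` are the first `k₀` indices of each block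
`[a k, a (k + 1))`, so among `1, …, n` there are at most `k₀ K` of them, where `K` is the number
of blocks started by time `n`. On the other hand every `l_i ≥ 1`, so `v n ≥ n ≥ a K`. Since the
gaps of `a` tend to infinity, `a k / k → ∞`, hence `k₀ K / a K → 0` as `K → ∞`.
-/

open Filter Topology Finset

section Growth

variable {a : ℕ → ℕ}

theorem le_apply_of_one_le (ha1 : 1 ≤ a 1) (hamono : ∀ k, 1 ≤ k → a k < a (k + 1))
    {k : ℕ} (hk : 1 ≤ k) : k ≤ a k := by
  induction k, hk using Nat.le_induction with
  | base => exact ha1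
  | succ m hm ih => exact ih.trans_lt (hamono m hm)

theorem add_mul_sub_le_of_forall_add_le {d M : ℕ} (h : ∀ k, M ≤ k → a k + d ≤ a (k + 1))
    {k : ℕ} (hk : M ≤ k) : a M + d * (k - M) ≤ a k := by
  induction k, hk using Nat.le_induction with
  | base => simp
  | succ m hm ih =>
    have hstep := h m hm
    rw [show m + 1 - M = m - M + 1 by omega, mul_add_one]
    omega

theorem eventually_mul_le_of_tendsto_sub_atTop
    (hgap : Tendsto (fun k => a (k + 1) - a k) atTop atTop) (C : ℕ) :
    ∀ᶠ k in atTop, C * k ≤ a k := by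
  -- the `+ 1` keeps the truncated difference `a (k + 1) - a k` from hiding a non-increase
  obtain ⟨M, hM⟩ := eventually_atTop.1 (hgap.eventually_ge_atTop (2 * C + 1))
  have hlin : ∀ k, M ≤ k → a M + 2 * C * (k - M) ≤ a k := fun k =>
    add_mul_sub_le_of_forall_add_le fun j hj => by
      have := hM j hj
      omega
  filter_upwards [eventually_ge_atTop (2 * M)] with k hk
  have hdouble : C * k ≤ 2 * C * (k - M) := by
    rw [mul_comm 2 C, mul_assoc]
    exact Nat.mul_le_mul_left C (by omega : k ≤ 2 * (k - M))
  exact hdouble.trans (le_add_self.trans (hlin k (by omega)))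

theorem tendsto_apply_div_atTop (hgap : Tendsto (fun k => a (k + 1) - a k) atTop atTop) :
    Tendsto (fun k => (a k : ℝ) / k) atTop atTop := by
  refine tendsto_atTop.2 fun b => ?_
  filter_upwards [eventually_mul_le_of_tendsto_sub_atTop hgap ⌈b⌉₊, eventually_gt_atTop 0]
    with k hk hk0
  calc b ≤ ⌈b⌉₊ := Nat.le_ceil b
    _ ≤ a k / k := by
      rw [le_div_iff₀ (by positivity)]
      exact_mod_cast hk

theorem tendsto_div_apply_nhds_zero (hgap : Tendsto (fun k => a (k + 1) - a k) atTop atTop) :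
    Tendsto (fun k : ℕ => (k : ℝ) / a k) atTop (𝓝 0) := by
  simpa only [Pi.inv_def, inv_div] using (tendsto_apply_div_atTop hgap).inv_tendsto_atTop

end Growth

section BlockIndex

variable {a : ℕ → ℕ}

/-- The index `k` of the block `[a k, a (k + 1))` containing `n`. -/
def blockIndex (a : ℕ → ℕ) (n : ℕ) : ℕ :=
  Nat.findGreatest (fun k => a k ≤ n) n

theorem blockIndex_mono : Monotone (blockIndex a) := fun _ _ hin =>
  Nat.findGreatest_mono (fun _ hk => hk.trans hin) hin

theorem tendsto_blockIndex_atTop : Tendsto (blockIndex a) atTop atTop :=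
  tendsto_atTop_atTop.2 fun b => ⟨max (a b) b, fun _ hn =>
    Nat.le_findGreatest ((le_max_right _ _).trans hn) ((le_max_left _ _).trans hn)⟩

theorem one_le_blockIndex (ha1 : a 1 = 1) {n : ℕ} (hn : 1 ≤ n) : 1 ≤ blockIndex a n :=
  Nat.le_findGreatest hn (by rwa [ha1])

theorem apply_blockIndex_le (ha1 : a 1 = 1) {n : ℕ} (hn : 1 ≤ n) : a (blockIndex a n) ≤ n :=
  Nat.findGreatest_spec (P := fun k => a k ≤ n) hn (by rwa [ha1])

theorem lt_apply_blockIndex_succ (ha1 : a 1 = 1) (hamono : ∀ k, 1 ≤ k → a k < a (k + 1))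
    (n : ℕ) : n < a (blockIndex a n + 1) := by
  by_cases hK : blockIndex a n + 1 ≤ n
  · exact not_le.1 <|
      Nat.findGreatest_is_greatest (P := fun k => a k ≤ n) (Nat.lt_succ_self _) hK
  · exact (not_le.1 hK).trans_le (le_apply_of_one_le ha1.ge hamono (by omega))

end BlockIndex

section Counting

variable {a t v : ℕ → ℕ}

theorem card_filter_le_blockIndex_mul (ha1 : a 1 = 1) (hamono : ∀ k, 1 ≤ k → a k < a (k + 1))
    (ht : ∀ k, 1 ≤ k → ∀ i, a k ≤ i → i < a (k + 1) → t i = a k) (k₀ n : ℕ) :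
    #{i ∈ Icc 1 n | i - t i + 1 ≤ k₀} ≤ blockIndex a n * k₀ := by
  have hsub : {i ∈ Icc 1 n | i - t i + 1 ≤ k₀} ⊆
      (Icc 1 (blockIndex a n)).biUnion fun k => Ico (a k) (a k + k₀) := by
    intro i hi
    obtain ⟨⟨hi1, hin⟩, hsmall⟩ := by simpa only [mem_filter, mem_Icc] using hi
    have hK1 := one_le_blockIndex ha1 hi1
    have hKi := apply_blockIndex_le ha1 hi1
    rw [ht _ hK1 i hKi (lt_apply_blockIndex_succ ha1 hamono i)] at hsmall
    exact mem_biUnion.2 ⟨blockIndex a i, mem_Icc.2 ⟨hK1, blockIndex_mono hin⟩,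
      mem_Ico.2 ⟨hKi, by omega⟩⟩
  calc #{i ∈ Icc 1 n | i - t i + 1 ≤ k₀}
      ≤ #((Icc 1 (blockIndex a n)).biUnion fun k => Ico (a k) (a k + k₀)) := card_le_card hsub
    _ ≤ #(Icc 1 (blockIndex a n)) * k₀ :=
      card_biUnion_le_card_mul _ _ _ fun k _ => by simp
    _ = blockIndex a n * k₀ := by simp

theorem card_filter_div_le (ha1 : a 1 = 1) (hamono : ∀ k, 1 ≤ k → a k < a (k + 1))
    (ht : ∀ k, 1 ≤ k → ∀ i, a k ≤ i → i < a (k + 1) → t i = a k)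
    (hv : ∀ n, v n = ∑ i ∈ Icc 1 n, (i - t i + 1)) (k₀ : ℕ) {n : ℕ} (hn : 1 ≤ n) :
    (#{i ∈ Icc 1 n | i - t i + 1 ≤ k₀} : ℝ) / v n
      ≤ k₀ * blockIndex a n / a (blockIndex a n) := by
  have hvn : n ≤ v n := by
    simpa [hv n] using card_nsmul_le_sum (Icc 1 n) (fun i => i - t i + 1) 1 fun _ _ => le_add_self
  have hK1 := one_le_blockIndex ha1 hn
  have hKpos : 0 < a (blockIndex a n) :=
    Nat.lt_of_lt_of_le hK1 (le_apply_of_one_le ha1.ge hamono hK1)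
  have hcard : (#{i ∈ Icc 1 n | i - t i + 1 ≤ k₀} : ℝ) ≤ k₀ * blockIndex a n := by
    rw [mul_comm]
    exact_mod_cast card_filter_le_blockIndex_mul ha1 hamono ht k₀ n
  exact div_le_div₀ (by positivity) hcard (by exact_mod_cast hKpos)
    (by exact_mod_cast (apply_blockIndex_le ha1 hn).trans hvn)

end Counting

/-- **Equation (31) of Wu (2009)**: if the strictly increasing integer sequence `(a_k)` with
`a_1 = 1` satisfies `a_{k+1} - a_k → ∞`, then for every fixed `k₀`,
`#{i ≤ n : i - t_i + 1 ≤ k₀} / v_n → 0`. -/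
theorem small_block_count_negligible
    (a : ℕ → ℕ) (ha1 : a 1 = 1) (hamono : ∀ k, 1 ≤ k → a k < a (k + 1))
    (hgap : Tendsto (fun k => a (k + 1) - a k) atTop atTop)
    (t : ℕ → ℕ) (ht : ∀ k, 1 ≤ k → ∀ i, a k ≤ i → i < a (k + 1) → t i = a k)
    (v : ℕ → ℕ) (hv : ∀ n, v n = ∑ i ∈ Finset.Icc 1 n, (i - t i + 1)) :
    ∀ k₀ : ℕ, Tendsto
      (fun n => (((Finset.Icc 1 n).filter fun i => i - t i + 1 ≤ k₀).card : ℝ) / v n)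
      atTop (nhds 0) := by
  intro k₀
  have hbound :
      Tendsto (fun n => (k₀ : ℝ) * blockIndex a n / a (blockIndex a n)) atTop (𝓝 0) := by
    simpa only [Function.comp_def, mul_div_assoc, mul_zero] using
      ((tendsto_div_apply_nhds_zero hgap).const_mul (k₀ : ℝ)).comp tendsto_blockIndex_atTop
  refine tendsto_of_tendsto_of_tendsto_of_le_of_le' tendsto_const_nhds hbound
    (Eventually.of_forall fun n => by positivity) ?_
  filter_upwards [eventually_ge_atTop 1] with n hn
  exact card_filter_div_le ha1 hamono ht hv k₀ hn
end

section
/- Let c > 0 and p > 1 be constants and a_k = ⌊c k^p⌋ for k ≥ 1, assumed strictly increasing. Then v_{a_m} ∼ m^{2p−1} c² p² / (4p − 2) as m → ∞, and for n with a_m ≤ n < a_{m+1} one has v_n ∼ v_{a_m} as n → ∞. -/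
open Filter Finset Asymptotics Topology

/-!
On the block `a_k ≤ i < a_{k+1}` one has `l_i = i - a_k + 1`, and `l_{a_{k+1}} = 1 = l_{a_k}`,
so `v_{a_{k+1}} - v_{a_k} = 1 + 2 + ⋯ + d_k = d_k (d_k + 1) / 2` with `d_k = a_{k+1} - a_k`.
Since `a_k` differs from `c k^p` by less than one and `(k+1)^p - k^p ∼ p k^{p-1} → ∞`, the
gap is `d_k ∼ c p k^{p-1}`, so the increments of `v_{a_m}` are `∼ c² p² m^{2p-2} / 2`, and a
Stolz–Cesàro argument sums them to `v_{a_m} ∼ c² p² m^{2p-1} / (2 (2p-1))`. This forces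
`v_{a_{m+1}} ∼ v_{a_m}`, and `v_n` is squeezed between these by monotonicity.
-/

theorem tendsto_mul_one_add_inv_rpow_sub_one (r : ℝ) :
    Tendsto (fun x : ℝ => x * ((1 + x⁻¹) ^ r - 1)) atTop (𝓝 r) := by
  have hderiv : HasDerivAt (fun h : ℝ => (1 + h) ^ r) r 0 := by
    simpa using ((hasDerivAt_id (0 : ℝ)).const_add 1).rpow_const (p := r) (by simp)
  refine ((hasDerivAt_iff_tendsto_slope_zero.mp hderiv).comp
    (tendsto_inv_atTop_nhdsGT_zero.mono_right (nhdsWithin_mono _ fun _ hx => ne_of_gt hx))).congr'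
    ?_
  filter_upwards [eventually_gt_atTop 0] with x hx
  simp

theorem isEquivalent_add_one_rpow_sub_rpow {r : ℝ} (hr : r ≠ 0) :
    (fun x : ℝ => (x + 1) ^ r - x ^ r) ~[atTop] fun x => r * x ^ (r - 1) := by
  have hφ := (isEquivalent_const_iff_tendsto hr).mpr (tendsto_mul_one_add_inv_rpow_sub_one r)
  refine (hφ.mul (IsEquivalent.refl (u := fun x : ℝ => x ^ (r - 1)))).congr_left ?_
  filter_upwards [eventually_gt_atTop 0] with x hx
  simp only [Pi.mul_apply]
  rw [Real.rpow_sub_one hx.ne', show x + 1 = x * (1 + x⁻¹) by field_simp,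
    Real.mul_rpow hx.le (by positivity)]
  field_simp

/-- Stolz–Cesàro. -/
theorem Asymptotics.IsEquivalent.of_sub_succ {u w : ℕ → ℝ}
    (h : (fun n => u (n + 1) - u n) ~[atTop] fun n => w (n + 1) - w n)
    (hw : Monotone w) (hw_top : Tendsto w atTop atTop) : u ~[atTop] w := by
  have hw_norm : Tendsto (norm ∘ w) atTop atTop := tendsto_norm_atTop_atTop.comp hw_top
  have hw_sub : (fun n => w n - w 0) ~[atTop] w :=
    IsEquivalent.refl.sub_isLittleO (isLittleO_const_left.mpr (Or.inr hw_norm))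
  have hsum := h.isLittleO.sum_range (fun n => sub_nonneg.mpr (hw n.le_succ)) <| by
    simpa only [sum_range_sub] using hw_sub.symm.tendsto_atTop hw_top
  simp only [Pi.sub_apply, sum_sub_distrib (f := fun i => u (i + 1) - u i), sum_range_sub]
    at hsum
  refine IsLittleO.isEquivalent <| ((hsum.trans_isBigO hw_sub.isBigO).add
    (isLittleO_const_left (c := u 0 - w 0).mpr (Or.inr hw_norm))).congr_left fun n => ?_
  simp only [Pi.sub_apply]
  ring

theorem isEquivalent_rpow_of_sub_succ {u : ℕ → ℝ} {A s : ℝ} (hA : 0 < A) (hs : 0 < s)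
    (h : (fun n => u (n + 1) - u n) ~[atTop] fun n => A * (n : ℝ) ^ (s - 1)) :
    u ~[atTop] fun n => A * (n : ℝ) ^ s / s := by
  refine h.trans (IsEquivalent.symm ?_) |>.of_sub_succ ?_ ?_
  · refine (IsEquivalent.refl (u := fun _ : ℕ => A / s)).mul
      ((isEquivalent_add_one_rpow_sub_rpow hs.ne').comp_tendsto
        tendsto_natCast_atTop_atTop) |>.congr_left ?_ |>.congr_right ?_
    all_goals refine Eventually.of_forall fun n => ?_
    all_goals simp only [Pi.mul_apply, Function.comp_apply, Nat.cast_succ]; field_simp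
  · intro m n hmn
    dsimp only
    gcongr
  · exact ((tendsto_rpow_atTop hs).comp tendsto_natCast_atTop_atTop).const_mul_atTop hA
      |>.atTop_div_const hs

theorem isEquivalent_natFloor_sub_succ {f : ℕ → ℝ} (hf : 0 ≤ f)
    (h : Tendsto (fun n => f (n + 1) - f n) atTop atTop) :
    (fun n => (⌊f (n + 1)⌋₊ : ℝ) - ⌊f n⌋₊) ~[atTop] fun n => f (n + 1) - f n := by
  have hfloor (x : ℝ) (hx : 0 ≤ x) : |(⌊x⌋₊ : ℝ) - x| ≤ 1 := by
    rw [abs_le]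
    constructor <;> linarith [Nat.floor_le hx, Nat.lt_floor_add_one x]
  have hbdd : (fun n => ((⌊f (n + 1)⌋₊ : ℝ) - ⌊f n⌋₊) - (f (n + 1) - f n)) =O[atTop]
      fun _ => (1 : ℝ) := by
    refine IsBigO.of_bound 2 (Eventually.of_forall fun n => ?_)
    rw [Real.norm_eq_abs, norm_one, mul_one,
      show (⌊f (n + 1)⌋₊ : ℝ) - ⌊f n⌋₊ - (f (n + 1) - f n)
        = ((⌊f (n + 1)⌋₊ : ℝ) - f (n + 1)) - ((⌊f n⌋₊ : ℝ) - f n) by ring]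
    linarith [abs_sub ((⌊f (n + 1)⌋₊ : ℝ) - f (n + 1)) ((⌊f n⌋₊ : ℝ) - f n),
      hfloor _ (hf (n + 1)), hfloor _ (hf n)]
  exact hbdd.trans_isLittleO
    ((isLittleO_one_left_iff ℝ).mpr (tendsto_norm_atTop_atTop.comp h))

theorem isEquivalent_natFloor_rpow_sub_succ {c p : ℝ} (hc : 0 < c) (hp : 1 < p) :
    (fun n : ℕ => (⌊c * ((n + 1 : ℕ) : ℝ) ^ p⌋₊ : ℝ) - ⌊c * (n : ℝ) ^ p⌋₊)
      ~[atTop] fun n => c * p * (n : ℝ) ^ (p - 1) := by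
  have hgrowth : (fun n : ℕ => c * ((n + 1 : ℕ) : ℝ) ^ p - c * (n : ℝ) ^ p) ~[atTop]
      fun n => c * p * (n : ℝ) ^ (p - 1) := by
    refine (IsEquivalent.refl (u := fun _ : ℕ => c)).mul
      ((isEquivalent_add_one_rpow_sub_rpow (r := p) (by positivity)).comp_tendsto
        tendsto_natCast_atTop_atTop) |>.congr_left ?_ |>.congr_right ?_
    all_goals refine Eventually.of_forall fun n => ?_
    all_goals simp only [Pi.mul_apply, Function.comp_apply, Nat.cast_succ]; ring
  refine (isEquivalent_natFloor_sub_succ (f := fun n : ℕ => c * (n : ℝ) ^ p)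
    (fun n => by positivity) (hgrowth.symm.tendsto_atTop ?_)).trans hgrowth
  exact (tendsto_rpow_atTop (by linarith)).comp tendsto_natCast_atTop_atTop
    |>.const_mul_atTop (by positivity)

theorem sum_Ioc_sub_add_one {A B : ℕ} (hAB : A ≤ B) {t : ℕ → ℕ}
    (ht : ∀ i, A ≤ i → i < B → t i = A) (htB : t B = B) :
    ∑ i ∈ Ioc A B, (i - t i + 1) = ∑ j ∈ range (B - A + 1), j := by
  have htA : A - t A + 1 = 1 := by
    rcases hAB.lt_or_eq with h | rfl
    · simp [ht A le_rfl h]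
    · simp [htB]
  -- both end terms `A - t A + 1` and `B - t B + 1` are `1`
  have hshift : ∑ i ∈ Ioc A B, (i - t i + 1) = ∑ i ∈ Ico A B, (i - t i + 1) := by
    have := (sum_Ioc_add_eq_sum_Icc hAB (f := fun i => i - t i + 1)).trans
      (sum_Ico_add_eq_sum_Icc hAB).symm
    rwa [htA, htB, Nat.sub_self, add_left_inj] at this
  rw [hshift, sum_Ico_eq_sum_range, sum_range_succ']
  refine sum_congr rfl fun j hj => ?_
  rw [mem_range] at hj
  rw [ht _ (by omega) (by omega)]
  omega

section Blocks

variable {a t v : ℕ → ℕ} (hamono : ∀ k, 1 ≤ k → a k < a (k + 1))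
  (ht : ∀ k, 1 ≤ k → ∀ i, a k ≤ i → i < a (k + 1) → t i = a k)
  (hv : ∀ n, v n = ∑ i ∈ Icc 1 n, (i - t i + 1))
include hamono ht hv

theorem sub_succ_eq_triangle_of_blocks {k : ℕ} (hk : 1 ≤ k) :
    (v (a (k + 1)) : ℝ) - v (a k) =
      ((a (k + 1) : ℝ) - a k) * ((a (k + 1) : ℝ) - a k + 1) / 2 := by
  have hle := (hamono k hk).le
  have hIcc (n : ℕ) : Icc 1 n = Ioc 0 n := Icc_add_one_left_eq_Ioc 0 n
  have hblock : v (a (k + 1)) = v (a k) + ∑ j ∈ range (a (k + 1) - a k + 1), j := by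
    have htB := ht (k + 1) (by omega) _ le_rfl (hamono _ (by omega))
    rw [← sum_Ioc_sub_add_one hle (ht k hk) htB, hv, hv, hIcc, hIcc]
    exact (sum_Ioc_consecutive _ (Nat.zero_le _) hle).symm
  have hgauss := sum_range_id_mul_two (a (k + 1) - a k + 1)
  rw [Nat.add_sub_cancel] at hgauss
  rw [hblock, Nat.cast_add, add_sub_cancel_left, ← Nat.cast_sub hle, eq_div_iff two_ne_zero]
  exact_mod_cast hgauss.trans (Nat.mul_comm _ _)

theorem isEquivalent_of_floor_rpow_blocks {c p : ℝ} (hc : 0 < c) (hp : 1 < p)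
    (ha : ∀ k, a k = ⌊c * (k : ℝ) ^ p⌋₊) :
    (fun m => (v (a m) : ℝ)) ~[atTop]
      fun m => (m : ℝ) ^ (2 * p - 1) * c ^ 2 * p ^ 2 / (4 * p - 2) := by
  have hgap : (fun k => (a (k + 1) : ℝ) - a k) ~[atTop]
      fun k => c * p * (k : ℝ) ^ (p - 1) := by
    simpa only [ha] using isEquivalent_natFloor_rpow_sub_succ hc hp
  have hgap_top : Tendsto (fun k : ℕ => c * p * (k : ℝ) ^ (p - 1)) atTop atTop :=
    ((tendsto_rpow_atTop (by linarith)).comp tendsto_natCast_atTop_atTop).const_mul_atTop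
      (by positivity)
  have hincr : (fun k => (v (a (k + 1)) : ℝ) - v (a k)) ~[atTop]
      fun k => c ^ 2 * p ^ 2 / 2 * (k : ℝ) ^ (2 * p - 1 - 1) := by
    refine (hgap.mul (hgap.add_const_of_norm_tendsto_atTop (c := 1)
      (tendsto_norm_atTop_atTop.comp hgap_top))).div (IsEquivalent.refl (u := fun _ => (2 : ℝ)))
      |>.congr_left ?_ |>.congr_right ?_
    · filter_upwards [eventually_ge_atTop 1] with k hk
      exact (sub_succ_eq_triangle_of_blocks hamono ht hv hk).symm
    · filter_upwards [eventually_ge_atTop 1] with k hk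
      have hk0 : (0 : ℝ) < k := by exact_mod_cast hk
      simp only [Pi.mul_apply, Pi.div_apply]
      rw [show 2 * p - 1 - 1 = (p - 1) + (p - 1) by ring, Real.rpow_add hk0]
      ring
  refine (isEquivalent_rpow_of_sub_succ (by positivity) (by linarith) hincr).congr_right
    (Eventually.of_forall fun m => ?_)
  rw [show 4 * p - 2 = 2 * (2 * p - 1) by ring]
  have : 2 * p - 1 ≠ 0 := by linarith
  field_simp

end Blocks

theorem tendsto_div_apply_succ_of_isEquivalent_rpow {u : ℕ → ℝ} {s A : ℝ} (hA : 0 < A)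
    (h : u ~[atTop] fun n => (n : ℝ) ^ s * A) :
    Tendsto (fun n => u (n + 1) / u n) atTop (𝓝 1) := by
  have hsucc : (fun n : ℕ => ((n + 1 : ℕ) : ℝ) ^ s * A) ~[atTop]
      fun n => (n : ℝ) ^ s * A := by
    refine IsEquivalent.mul ?_ IsEquivalent.refl
    refine IsEquivalent.rpow (fun n => Nat.cast_nonneg n) ?_
    simpa only [Nat.cast_succ] using IsEquivalent.refl.add_const_of_norm_tendsto_atTop (c := 1)
      (tendsto_norm_atTop_atTop.comp tendsto_natCast_atTop_atTop)
  have hu_ne : ∀ᶠ n in atTop, u n ≠ 0 := by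
    refine (h.eventually_pos ?_).mono fun n hn => hn.ne'
    filter_upwards [eventually_gt_atTop 0] with n hn
    have : (0 : ℝ) < n := by exact_mod_cast hn
    positivity
  exact (isEquivalent_iff_tendsto_one hu_ne).mp
    (((h.comp_tendsto (tendsto_add_atTop_nat 1)).trans hsucc).trans h.symm)

theorem tendsto_atTop_of_lt_apply_succ {b mn : ℕ → ℕ} (hb : Monotone b)
    (h : ∀ᶠ n in atTop, n < b (mn n + 1)) : Tendsto mn atTop atTop := by
  refine tendsto_atTop.mpr fun M => ?_
  filter_upwards [h, eventually_ge_atTop (b M)] with n hn hMn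
  exact Nat.lt_succ_iff.mp (hb.reflect_lt (hMn.trans_lt hn))

theorem tendsto_div_of_mem_blocks {v : ℕ → ℝ} (hv : Monotone v) {b mn : ℕ → ℕ}
    (hpos : ∀ᶠ m in atTop, 0 < v (b m))
    (hratio : Tendsto (fun m => v (b (m + 1)) / v (b m)) atTop (𝓝 1))
    (hmn : Tendsto mn atTop atTop)
    (hblock : ∀ᶠ n in atTop, b (mn n) ≤ n ∧ n < b (mn n + 1)) :
    Tendsto (fun n => v n / v (b (mn n))) atTop (𝓝 1) := by
  refine tendsto_of_tendsto_of_tendsto_of_le_of_le' tendsto_const_nhds (hratio.comp hmn) ?_ ?_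
  all_goals filter_upwards [hblock, hmn.eventually hpos] with n hn hpos
  · exact (one_le_div hpos).mpr (hv hn.1)
  · exact div_le_div_of_nonneg_right (hv hn.2.le) hpos.le

/-- **Equation (20) of Wu (2009)**: for `a_k = ⌊c k^p⌋` (`c > 0`, `p > 1`), assumed strictly
increasing, `v_{a_m} ∼ m^{2p-1} c² p² / (4p - 2)` as `m → ∞`, and `v_n ∼ v_{a_{m_n}}` where
`m_n` is the index with `a_{m_n} ≤ n < a_{m_n + 1}`. -/
theorem vn_asymptotics_polynomial_blocks
    (c p : ℝ) (hc : 0 < c) (hp : 1 < p)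
    (a : ℕ → ℕ) (ha : ∀ k, a k = ⌊c * (k : ℝ) ^ p⌋₊)
    (hamono : ∀ k, 1 ≤ k → a k < a (k + 1))
    (t : ℕ → ℕ) (ht : ∀ k, 1 ≤ k → ∀ i, a k ≤ i → i < a (k + 1) → t i = a k)
    (v : ℕ → ℕ) (hv : ∀ n, v n = ∑ i ∈ Finset.Icc 1 n, (i - t i + 1))
    -- m_n is the index with a_{m_n} ≤ n < a_{m_n + 1}
    (mn : ℕ → ℕ) (hmn : ∀ n, a 1 ≤ n → 1 ≤ mn n ∧ a (mn n) ≤ n ∧ n < a (mn n + 1)) :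
    Tendsto
      (fun m => (v (a m) : ℝ) / ((m : ℝ) ^ (2 * p - 1) * c ^ 2 * p ^ 2 / (4 * p - 2)))
      atTop (nhds 1) ∧
    Tendsto (fun n => (v n : ℝ) / v (a (mn n))) atTop (nhds 1) := by
  have hequiv := isEquivalent_of_floor_rpow_blocks hamono ht hv hc hp ha
  have hconst : 0 < c ^ 2 * p ^ 2 / (4 * p - 2) := by
    have : 0 < 4 * p - 2 := by linarith
    positivity
  have htarget_pos :
      ∀ᶠ m : ℕ in atTop, 0 < (m : ℝ) ^ (2 * p - 1) * c ^ 2 * p ^ 2 / (4 * p - 2) := by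
    filter_upwards [eventually_gt_atTop 0] with m hm
    have : (0 : ℝ) < m := by exact_mod_cast hm
    exact div_pos (by positivity) (by linarith)
  refine ⟨(isEquivalent_iff_tendsto_one (htarget_pos.mono fun _ h => h.ne')).mp hequiv, ?_⟩
  have ha_mono : Monotone a := fun i j hij => by
    rw [ha, ha]
    gcongr
  have hblock : ∀ᶠ n in atTop, a (mn n) ≤ n ∧ n < a (mn n + 1) :=
    (eventually_ge_atTop (a 1)).mono fun n hn => (hmn n hn).2
  refine tendsto_div_of_mem_blocks (v := fun n => (v n : ℝ)) (fun i j hij => ?_)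
    (hequiv.eventually_pos htarget_pos)
    (tendsto_div_apply_succ_of_isEquivalent_rpow hconst
      (hequiv.congr_right (Eventually.of_forall fun m => by ring)))
    (tendsto_atTop_of_lt_apply_succ ha_mono (hblock.mono fun _ h => h.2)) hblock
  simp only [hv, Nat.cast_le]
  exact sum_le_sum_of_subset (Icc_subset_Icc_right hij)
end

section
/- Let (a_k)_{k≥1} be a strictly increasing integer sequence with a_1 = 1 such that a_{k+1} − a_k → ∞ as k → ∞, and let (ρ_k)_{k≥1} be a sequence of nonnegative reals with ρ_k → 0. Then lim_{n→∞} (1/v_n) ∑_{i=1}^n (i − t_i + 1) ρ_{i − t_i + 1} = 0. -/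
/-!
Write `l i = i - t i + 1` for the position of `i` inside its block. As `ρ` is bounded and
`|ρ m| ≤ ε` for `m ≥ N`, it suffices that the indices with `l i < N` carry a vanishing share of
the total weight `v n = ∑ l i`. Such an index in a late block is charged to the last element
`t i - 1` of the preceding block, whose weight is a gap `a k - a (k - 1) ≥ M`; each block end
receives fewer than `N` charges, each smaller than `N`, so the late part of that share is at most
`N² / M`. The early indices contribute a constant, negligible since `v n ≥ n`.
-/

open Filter Finset Topology

theorem exists_le_lt_apply_succ {a : ℕ → ℕ} {k₀ i : ℕ} (ha : ∀ k ≥ k₀, a k < a (k + 1))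
    (hi : a k₀ ≤ i) : ∃ k ≥ k₀, a k ≤ i ∧ i < a (k + 1) := by
  induction i, hi using Nat.le_induction with
  | base => exact ⟨k₀, le_rfl, le_rfl, ha k₀ le_rfl⟩
  | succ i _ ih =>
    obtain ⟨k, hk, hki, hik⟩ := ih
    rcases (Nat.succ_le_of_lt hik).lt_or_eq with h | h
    · exact ⟨k, hk, by omega, h⟩
    · exact ⟨k + 1, by omega, h.ge, by have := ha (k + 1) (by omega); omega⟩

theorem mul_sum_le_sq_mul_sum {ι : Type*} [DecidableEq ι] {s T : Finset ι} {p : ι → ι}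
    {l : ι → ℕ} {M N : ℕ} (hpT : ∀ i ∈ s, p i ∈ T) (hM : ∀ i ∈ s, M ≤ l (p i))
    (hN : ∀ i ∈ s, l i < N) (hinj : Set.InjOn (fun i => (p i, l i)) s) :
    M * ∑ i ∈ s, l i ≤ N ^ 2 * ∑ j ∈ T, l j := by
  have hsum : ∑ i ∈ s, l i ≤ #s * N := by
    simpa using sum_le_card_nsmul s l N fun i hi => (hN i hi).le
  have hcard : #s ≤ #(s.image p) * N := by
    calc #s ≤ #(s.image p ×ˢ range N) :=
          card_le_card_of_injOn _ (fun i hi => by simpa using ⟨⟨i, hi, rfl⟩, hN i hi⟩) hinj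
      _ = #(s.image p) * N := by rw [card_product, card_range]
  have himage : M * #(s.image p) ≤ ∑ j ∈ T, l j :=
    calc M * #(s.image p) = ∑ _j ∈ s.image p, M := by rw [sum_const, smul_eq_mul, mul_comm]
      _ ≤ ∑ j ∈ s.image p, l j := sum_le_sum (forall_mem_image.2 hM)
      _ ≤ ∑ j ∈ T, l j := sum_le_sum_of_subset (image_subset_iff.2 hpT)
  calc M * ∑ i ∈ s, l i ≤ M * (#(s.image p) * N * N) := by gcongr; exact hsum.trans (by gcongr)
    _ = N ^ 2 * (M * #(s.image p)) := by ring
    _ ≤ N ^ 2 * ∑ j ∈ T, l j := by gcongr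

theorem tendsto_sum_mul_div_sum_of_sparse {α ι : Type*} {L : Filter α} (s : α → Finset ι)
    {w x : ι → ℝ} {C : ℝ} (hw : ∀ i, 0 ≤ w i) (hC : ∀ i, |x i| ≤ C)
    (hsparse : ∀ ε > 0, ∀ δ > 0,
      ∀ᶠ n in L, ∑ i ∈ s n with ε < |x i|, w i ≤ δ * ∑ i ∈ s n, w i) :
    Tendsto (fun n => (∑ i ∈ s n, w i * x i) / ∑ i ∈ s n, w i) L (𝓝 0) := by
  obtain ⟨C, hC0, hC⟩ : ∃ C, 0 ≤ C ∧ ∀ i, |x i| ≤ C :=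
    ⟨max C 0, le_max_right _ _, fun i => (hC i).trans (le_max_left _ _)⟩
  rw [NormedAddGroup.tendsto_nhds_zero]
  intro ε hε
  filter_upwards [hsparse (ε / 2) (half_pos hε) (ε / (4 * (C + 1))) (by positivity)] with n hn
  set W := ∑ i ∈ s n, w i
  have hCδ : C * (ε / (4 * (C + 1))) ≤ ε / 4 := by
    rw [mul_div_assoc', div_le_div_iff₀ (by positivity) (by positivity)]
    nlinarith
  have hbound : |∑ i ∈ s n, w i * x i| ≤ 3 * ε / 4 * W :=
    calc |∑ i ∈ s n, w i * x i| ≤ ∑ i ∈ s n, w i * |x i| := by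
          simpa only [abs_mul, abs_of_nonneg (hw _)] using
            abs_sum_le_sum_abs (fun i => w i * x i) (s n)
      _ = ∑ i ∈ s n with ¬ ε / 2 < |x i|, w i * |x i|
            + ∑ i ∈ s n with ε / 2 < |x i|, w i * |x i| :=
          (sum_filter_not_add_sum_filter _ _ _).symm
      _ ≤ ∑ i ∈ s n with ¬ ε / 2 < |x i|, w i * (ε / 2)
            + ∑ i ∈ s n with ε / 2 < |x i|, w i * C := by
          gcongr with i hi i
          · exact hw i
          · exact not_lt.1 (mem_filter.1 hi).2
          · exact hw i
          · exact hC i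
      _ ≤ W * (ε / 2) + C * (ε / (4 * (C + 1)) * W) := by
          rw [← sum_mul, ← sum_mul, mul_comm _ C]
          gcongr
          exact sum_le_sum_of_subset_of_nonneg (filter_subset _ _) fun i _ _ => hw i
      _ ≤ 3 * ε / 4 * W := by
          have : 0 ≤ W := sum_nonneg fun i _ => hw i
          nlinarith
  rw [norm_div, Real.norm_eq_abs, Real.norm_eq_abs]
  calc |∑ i ∈ s n, w i * x i| / |W| ≤ 3 * ε / 4 :=
        div_le_of_le_mul₀ (abs_nonneg _) (by positivity) (hbound.trans (by
          gcongr; exact le_abs_self W))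
    _ < ε := by linarith

/-- The paper's `l_i`. -/
def blockPos (t : ℕ → ℕ) (i : ℕ) : ℕ := i - t i + 1

section Blocks

variable {a t : ℕ → ℕ} {k₀ M i : ℕ}

theorem le_blockPos_pred_blockStart (ht : ∀ k, 1 ≤ k → ∀ i, a k ≤ i → i < a (k + 1) → t i = a k)
    (hk₀ : 1 ≤ k₀) (hM : 1 ≤ M) (hgap : ∀ k ≥ k₀, M ≤ a (k + 1) - a k)
    (hi : a (k₀ + 2) ≤ i) : 2 ≤ t i ∧ t i ≤ i ∧ M ≤ blockPos t (t i - 1) := by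
  have hlt : ∀ k ≥ k₀, a k < a (k + 1) := fun k hk => by have := hgap k hk; omega
  obtain ⟨k, hk, hki, hik⟩ := exists_le_lt_apply_succ (fun k hk => hlt k (by omega)) hi
  obtain ⟨m, rfl⟩ : ∃ m, k = m + 2 := ⟨k - 2, by omega⟩
  have hti : t i = a (m + 2) := ht (m + 2) (by omega) i hki hik
  have hlt₁ : a (m + 1) < a (m + 2) := hlt (m + 1) (by omega)
  have hlt₀ : a m < a (m + 1) := hlt m (by omega)
  have hgap₁ : M ≤ a (m + 2) - a (m + 1) := hgap (m + 1) (by omega)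
  have hprev : t (a (m + 2) - 1) = a (m + 1) :=
    ht (m + 1) (by omega) _ (by omega) (by omega : a (m + 2) - 1 < a (m + 2))
  simp only [blockPos, hti, hprev]
  omega

theorem natCast_le_sum_blockPos (t : ℕ → ℕ) (n : ℕ) :
    (n : ℝ) ≤ ∑ i ∈ Icc 1 n, (blockPos t i : ℝ) := by
  calc (n : ℝ) = ∑ _i ∈ Icc 1 n, (1 : ℝ) := by simp
    _ ≤ ∑ i ∈ Icc 1 n, (blockPos t i : ℝ) := by
        gcongr; exact_mod_cast Nat.le_add_left 1 _

theorem mul_sum_blockPos_lt_le (ht : ∀ k, 1 ≤ k → ∀ i, a k ≤ i → i < a (k + 1) → t i = a k)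
    (hk₀ : 1 ≤ k₀) (hM : 1 ≤ M) (hgap : ∀ k ≥ k₀, M ≤ a (k + 1) - a k) (N n : ℕ) :
    M * ∑ i ∈ {i ∈ Icc 1 n | blockPos t i < N} with a (k₀ + 2) ≤ i, blockPos t i
      ≤ N ^ 2 * ∑ i ∈ Icc 1 n, blockPos t i := by
  have hfacts := fun i (hi : i ∈ {i ∈ Icc 1 n | blockPos t i < N}.filter (a (k₀ + 2) ≤ ·)) =>
    le_blockPos_pred_blockStart ht hk₀ hM hgap (mem_filter.1 hi).2
  refine mul_sum_le_sq_mul_sum (p := fun i => t i - 1) (fun i hi => ?_)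
    (fun i hi => (hfacts i hi).2.2) (fun i hi => (mem_filter.1 (mem_filter.1 hi).1).2)
    (fun i hi j hj hij => ?_)
  · obtain ⟨hti₂, hti, -⟩ := hfacts i hi
    have := mem_Icc.1 (mem_filter.1 (mem_filter.1 hi).1).1
    simp only [mem_Icc]
    omega
  · obtain ⟨hti₂, hti, -⟩ := hfacts i hi
    obtain ⟨htj₂, htj, -⟩ := hfacts j hj
    simp only [Prod.mk.injEq, blockPos] at hij
    omega

theorem eventually_sum_blockPos_lt_le (hgap : Tendsto (fun k => a (k + 1) - a k) atTop atTop)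
    (ht : ∀ k, 1 ≤ k → ∀ i, a k ≤ i → i < a (k + 1) → t i = a k) (N : ℕ) {δ : ℝ} (hδ : 0 < δ) :
    ∀ᶠ n in atTop, ∑ i ∈ Icc 1 n with blockPos t i < N, (blockPos t i : ℝ)
      ≤ δ * ∑ i ∈ Icc 1 n, (blockPos t i : ℝ) := by
  obtain ⟨M, hM⟩ := exists_nat_ge (2 * N ^ 2 / δ)
  obtain ⟨k₁, hk₁⟩ := (hgap.eventually_ge_atTop (M + 1)).exists_forall_of_atTop
  set k₀ := max k₁ 1
  set c := ∑ i ∈ range (a (k₀ + 2)), (blockPos t i : ℝ)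
  filter_upwards [eventually_ge_atTop ⌈2 * c / δ⌉₊] with n hn
  set V := ∑ i ∈ Icc 1 n, (blockPos t i : ℝ)
  set s := {i ∈ Icc 1 n | blockPos t i < N}
  have hearly : ∑ i ∈ s with ¬ a (k₀ + 2) ≤ i, (blockPos t i : ℝ) ≤ δ / 2 * V := by
    have hcV : 2 * c / δ ≤ V := (Nat.ceil_le.1 hn).trans (natCast_le_sum_blockPos t n)
    rw [div_le_iff₀ hδ] at hcV
    refine (sum_le_sum_of_subset_of_nonneg (fun i hi => ?_) fun i _ _ => by positivity).trans
      (by linarith : c ≤ δ / 2 * V)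
    simp only [mem_filter, not_le] at hi
    exact mem_range.2 hi.2
  have hlate : ∑ i ∈ s with a (k₀ + 2) ≤ i, (blockPos t i : ℝ) ≤ δ / 2 * V := by
    have hcharge : ((M + 1 : ℕ) : ℝ) * ∑ i ∈ s with a (k₀ + 2) ≤ i, (blockPos t i : ℝ)
        ≤ N ^ 2 * V := by
      simp only [V]
      exact_mod_cast mul_sum_blockPos_lt_le ht (le_max_right k₁ 1) (Nat.le_add_left 1 M)
        (fun k hk => hk₁ k (le_of_max_le_left hk)) N n
    have hNM : (N : ℝ) ^ 2 ≤ δ / 2 * (M + 1 : ℕ) := by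
      rw [div_le_iff₀ hδ] at hM
      push_cast
      nlinarith
    have hV : 0 ≤ V := sum_nonneg fun i _ => by positivity
    refine le_of_mul_le_mul_left ?_ (by positivity : (0 : ℝ) < (M + 1 : ℕ))
    nlinarith
  rw [← sum_filter_not_add_sum_filter s (a (k₀ + 2) ≤ ·)]
  linarith

end Blocks

theorem weighted_block_average_tendsto_zero_general
    (a : ℕ → ℕ)
    (hgap : Tendsto (fun k => a (k + 1) - a k) atTop atTop)
    (t : ℕ → ℕ) (ht : ∀ k, 1 ≤ k → ∀ i, a k ≤ i → i < a (k + 1) → t i = a k)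
    (v : ℕ → ℕ) (hv : ∀ n, v n = ∑ i ∈ Finset.Icc 1 n, (i - t i + 1))
    (ρ : ℕ → ℝ) (hρ : Tendsto ρ atTop (nhds 0)) :
    Tendsto
      (fun n => (∑ i ∈ Finset.Icc 1 n, ((i - t i + 1 : ℕ) : ℝ) * ρ (i - t i + 1)) / v n)
      atTop (nhds 0) := by
  have hρabs : Tendsto (fun k => |ρ k|) atTop (𝓝 0) := by simpa using hρ.abs
  obtain ⟨C, hC⟩ := hρabs.bddAbove_range
  have hvV : ∀ n, (v n : ℝ) = ∑ i ∈ Icc 1 n, (blockPos t i : ℝ) := fun n => by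
    rw [hv, Nat.cast_sum]; rfl
  simp_rw [hvV]
  refine tendsto_sum_mul_div_sum_of_sparse (fun n => Icc 1 n) (x := fun i => ρ (blockPos t i))
    (fun i => Nat.cast_nonneg _) (fun i => hC ⟨blockPos t i, rfl⟩) fun ε hε δ hδ => ?_
  obtain ⟨N, hN⟩ := eventually_atTop.1 (hρabs.eventually_le_const hε)
  filter_upwards [eventually_sum_blockPos_lt_le hgap ht N hδ] with n hn
  refine le_trans (sum_le_sum_of_subset_of_nonneg ?_ fun i _ _ => Nat.cast_nonneg _) hn
  refine monotone_filter_right _ fun i _ hi => ?_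
  contrapose! hi
  exact hN _ hi

/-- **Display (34) of Wu (2009), deterministic core**: if `a_{k+1} - a_k → ∞` and
`ρ_k → 0` with `ρ_k ≥ 0`, then `(1/v_n) ∑_{i=1}^n (i - t_i + 1) ρ_{i - t_i + 1} → 0`. -/
theorem weighted_block_average_tendsto_zero
    (a : ℕ → ℕ) (ha1 : a 1 = 1) (hamono : ∀ k, 1 ≤ k → a k < a (k + 1))
    (hgap : Tendsto (fun k => a (k + 1) - a k) atTop atTop)
    (t : ℕ → ℕ) (ht : ∀ k, 1 ≤ k → ∀ i, a k ≤ i → i < a (k + 1) → t i = a k)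
    (v : ℕ → ℕ) (hv : ∀ n, v n = ∑ i ∈ Finset.Icc 1 n, (i - t i + 1))
    (ρ : ℕ → ℝ) (hρ0 : ∀ k, 0 ≤ ρ k) (hρ : Tendsto ρ atTop (nhds 0)) :
    Tendsto
      (fun n => (∑ i ∈ Finset.Icc 1 n, ((i - t i + 1 : ℕ) : ℝ) * ρ (i - t i + 1)) / v n)
      atTop (nhds 0) :=
  weighted_block_average_tendsto_zero_general a hgap t ht v hv ρ hρ
end
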